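/- arXiv:1605.05498 — 4 statements merged into one kernel-verified Lean document; each statement's English description precedes it below -/
import Mathlib

section
/- Let ε > 0, K > 0, F(z) = (ε+|z|²)^{−1} on ℝ^m, and suppose w, k ∈ ℝ^m satisfy F(w+k) ≤ (1+K²) F(w). Then |F(w+k) − F(w) − ⟨∇F(w), k⟩| ≤ 5(1+K²)|k|² F(w)² + 2(1+K²)|k|³ F(w)^{5/2}. -/
open Real Set Filter Topology
open scoped RealInnerProductSpace

/-!
Write `a = ε + ‖w‖²`, `b = ε + ‖w + k‖²`. Since `2⟪w, k⟫ = b - a - ‖k‖²`, the Taylor remainder of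
`z ↦ (ε + ‖z‖²)⁻¹` is exactly `((b - a)² - ‖k‖² b) / (a² b)`, and
`b - a = ⟪w + (w + k), k⟫` gives `(b - a)² ≤ 2‖k‖²(a + b)`. This yields the unconditional bound
`‖k‖² F(w) (2 F(w + k) + 3 F(w))`, and `F(w + k) ≤ (1 + K²) F(w)` turns it into
`5 (1 + K²) ‖k‖² F(w)²`.
-/

theorem abs_inv_sub_inv_add_div_sq_le {a b c : ℝ} (ha : 0 < a) (hb : 0 < b) (hc : 0 ≤ c)
    (h : (b - a) ^ 2 ≤ 2 * c * (a + b)) :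
    |b⁻¹ - a⁻¹ + (b - a - c) / a ^ 2| ≤ c * a⁻¹ * (2 * b⁻¹ + 3 * a⁻¹) := by
  have hremainder : b⁻¹ - a⁻¹ + (b - a - c) / a ^ 2 = ((b - a) ^ 2 - c * b) / (a ^ 2 * b) := by
    field_simp
    ring
  have hrhs : c * a⁻¹ * (2 * b⁻¹ + 3 * a⁻¹) = c * (2 * a + 3 * b) / (a ^ 2 * b) := by
    field_simp
  rw [hremainder, hrhs, abs_div, abs_of_pos (by positivity : 0 < a ^ 2 * b)]
  gcongr
  rw [abs_le]
  constructor <;> nlinarith [sq_nonneg (b - a), mul_nonneg hc hb.le]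

section

variable {E : Type*} [NormedAddCommGroup E] [InnerProductSpace ℝ E]

theorem sq_norm_add_sub_sq_norm_sq_le (w k : E) :
    (‖w + k‖ ^ 2 - ‖w‖ ^ 2) ^ 2 ≤ 2 * ‖k‖ ^ 2 * (‖w‖ ^ 2 + ‖w + k‖ ^ 2) := by
  have hdiff : ‖w + k‖ ^ 2 - ‖w‖ ^ 2 = ⟪w + (w + k), k⟫ := by
    rw [norm_add_sq_real, inner_add_left, inner_add_left, real_inner_self_eq_norm_sq]
    ring
  have hcs : |⟪w + (w + k), k⟫| ≤ (‖w‖ + ‖w + k‖) * ‖k‖ :=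
    (abs_real_inner_le_norm _ _).trans (by gcongr; exact norm_add_le _ _)
  calc (‖w + k‖ ^ 2 - ‖w‖ ^ 2) ^ 2 = |⟪w + (w + k), k⟫| ^ 2 := by rw [hdiff, sq_abs]
    _ ≤ ((‖w‖ + ‖w + k‖) * ‖k‖) ^ 2 := by gcongr
    _ ≤ 2 * ‖k‖ ^ 2 * (‖w‖ ^ 2 + ‖w + k‖ ^ 2) := by
      nlinarith [sq_nonneg (‖w‖ - ‖w + k‖), sq_nonneg ‖k‖,
        mul_nonneg (sq_nonneg ‖k‖) (sq_nonneg (‖w‖ - ‖w + k‖))]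

theorem abs_inv_eps_add_sq_norm_sub_linear_le {ε : ℝ} (hε : 0 < ε) (w k : E) :
    |(ε + ‖w + k‖ ^ 2)⁻¹ - (ε + ‖w‖ ^ 2)⁻¹ + 2 * (ε + ‖w‖ ^ 2)⁻¹ ^ 2 * ⟪w, k⟫| ≤
      ‖k‖ ^ 2 * (ε + ‖w‖ ^ 2)⁻¹ * (2 * (ε + ‖w + k‖ ^ 2)⁻¹ + 3 * (ε + ‖w‖ ^ 2)⁻¹) := by
  have hinner : 2 * ⟪w, k⟫ = (ε + ‖w + k‖ ^ 2) - (ε + ‖w‖ ^ 2) - ‖k‖ ^ 2 := by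
    rw [norm_add_sq_real]
    ring
  have hsq : ((ε + ‖w + k‖ ^ 2) - (ε + ‖w‖ ^ 2)) ^ 2 ≤
      2 * ‖k‖ ^ 2 * ((ε + ‖w‖ ^ 2) + (ε + ‖w + k‖ ^ 2)) := by
    nlinarith [sq_norm_add_sub_sq_norm_sq_le w k, sq_nonneg ‖k‖]
  convert abs_inv_sub_inv_add_div_sq_le (by positivity) (by positivity) (sq_nonneg ‖k‖) hsq
    using 2
  rw [← hinner, div_eq_mul_inv, inv_pow]
  ring

end

theorem stmt9_general (m : ℕ) (ε K : ℝ) (hε : 0 < ε)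
    (F : EuclideanSpace ℝ (Fin m) → ℝ)
    (hF : ∀ z, F z = (ε + ‖z‖ ^ 2)⁻¹) :
    ∀ w k : EuclideanSpace ℝ (Fin m), F (w + k) ≤ (1 + K ^ 2) * F w →
      abs (F (w + k) - F w - (inner ℝ ((-2 * (F w) ^ 2) • w) k : ℝ)) ≤
        5 * (1 + K ^ 2) * ‖k‖ ^ 2 * (F w) ^ 2 +
          2 * (1 + K ^ 2) * ‖k‖ ^ 3 * (F w) ^ ((5:ℝ) / 2) := by
  intro w k hle
  have hFw : 0 ≤ F w := by rw [hF]; positivity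
  have hremainder := abs_inv_eps_add_sq_norm_sub_linear_le hε w k
  rw [← hF, ← hF] at hremainder
  calc |F (w + k) - F w - ⟪(-2 * F w ^ 2) • w, k⟫|
      = |F (w + k) - F w + 2 * F w ^ 2 * ⟪w, k⟫| := by rw [real_inner_smul_left]; ring_nf
    _ ≤ ‖k‖ ^ 2 * F w * (2 * F (w + k) + 3 * F w) := hremainder
    _ ≤ ‖k‖ ^ 2 * F w * (2 * ((1 + K ^ 2) * F w) + 3 * ((1 + K ^ 2) * F w)) := by
      gcongr
      nlinarith [sq_nonneg K]
    _ = 5 * (1 + K ^ 2) * ‖k‖ ^ 2 * F w ^ 2 := by ring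
    _ ≤ _ := le_add_of_nonneg_right (by have := Real.rpow_nonneg hFw ((5 : ℝ) / 2); positivity)

/-- quantitative bound on the second order increment of
`F(z) = (ε+|z|²)⁻¹` under `F(w+k) ≤ (1+K²) F(w)`. -/
theorem stmt9 (m : ℕ) (ε K : ℝ) (hε : 0 < ε) (hK : 0 < K)
    (F : EuclideanSpace ℝ (Fin m) → ℝ)
    (hF : ∀ z, F z = (ε + ‖z‖ ^ 2)⁻¹) :
    ∀ w k : EuclideanSpace ℝ (Fin m), F (w + k) ≤ (1 + K ^ 2) * F w →
      abs (F (w + k) - F w - (inner ℝ ((-2 * (F w) ^ 2) • w) k : ℝ)) ≤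
        5 * (1 + K ^ 2) * ‖k‖ ^ 2 * (F w) ^ 2 +
          2 * (1 + K ^ 2) * ‖k‖ ^ 3 * (F w) ^ ((5:ℝ) / 2) :=
  stmt9_general m ε K hε F hF
end

section
/- Let R(x) = (ε + |x|²)^p on ℝ^m with ε > 0 and p > 1. Then there is a constant C(p) depending only on p such that for all x, y ∈ ℝ^m: R(x+y) − R(x) − ⟨∇R(x), y⟩ ≤ C(p){ (ε+|x|²)^{p−1}|y|² + (ε+|x|²)^{p−2}|y|⁴ + (ε+|x|²)|y|^{2p−2} + |y|^{2p} }. -/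
/-!
Write `a = ε + ‖x‖²`, `B = ‖y‖²` and `d = ‖x + y‖² - ‖x‖² = 2⟪x, y⟫ + B`. The left-hand side is
the Bregman divergence `(a + d)^p - a^p - p a^(p-1) d` of `t ↦ t^p` plus `p a^(p-1) B`.
Comparing with the tangent at `a + d` bounds the divergence by `p ((a + d)^(p-1) - a^(p-1)) d`,
hence by a multiple of `a^(p-2) d² + |d|^p`: for `p ≤ 2` because `t ↦ t^(p-1)` is
`(p-1)`-Hölder, for `p ≥ 2` by the mean value bound for `t^(p-1)`. Cauchy–Schwarz gives
`d² ≤ 8aB + 2B²`, and the cross term `(aB)^(p/2)` produced by `|d|^p` is the geometric mean of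
`a^(p-1) B` and `a B^(p-1)`.
-/

open Real

lemma rpow_tangent_le {p u w : ℝ} (hp : 1 ≤ p) (hu : 0 < u) (hw : 0 ≤ w) :
    u ^ p + p * u ^ (p - 1) * (w - u) ≤ w ^ p := by
  have h := one_add_mul_self_le_rpow_one_add (s := w / u - 1)
    (by linarith [div_nonneg hw hu.le]) hp
  rw [add_sub_cancel, div_rpow hw hu.le, le_div_iff₀ (rpow_pos_of_pos hu p)] at h
  calc u ^ p + p * u ^ (p - 1) * (w - u) = (1 + p * (w / u - 1)) * u ^ p := by
        rw [rpow_sub_one hu.ne']; field_simp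
    _ ≤ w ^ p := h

lemma rpow_sub_rpow_sub_mul_le {p u w : ℝ} (hp : 1 ≤ p) (hu : 0 < u) (hw : 0 < w) :
    w ^ p - u ^ p - p * u ^ (p - 1) * (w - u) ≤ p * (w ^ (p - 1) - u ^ (p - 1)) * (w - u) := by
  linear_combination rpow_tangent_le hp hw hu.le

lemma abs_rpow_sub_rpow_le_of_le_one {q u w : ℝ} (hq₀ : 0 ≤ q) (hq₁ : q ≤ 1) (hu : 0 ≤ u)
    (hw : 0 ≤ w) : |w ^ q - u ^ q| ≤ |w - u| ^ q := by
  wlog huw : u ≤ w generalizing u w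
  · rw [abs_sub_comm, abs_sub_comm w]; exact this hw hu (le_of_not_ge huw)
  rw [abs_of_nonneg (sub_nonneg.2 (rpow_le_rpow hu huw hq₀)), abs_of_nonneg (sub_nonneg.2 huw)]
  have := rpow_add_le_add_rpow hu (sub_nonneg.2 huw) hq₀ hq₁
  rw [add_sub_cancel] at this
  linarith

lemma abs_rpow_sub_rpow_le_of_one_le {q u w : ℝ} (hq : 1 ≤ q) (hu : 0 < u) (hw : 0 < w) :
    |w ^ q - u ^ q| ≤ q * max u w ^ (q - 1) * |w - u| := by
  wlog huw : u ≤ w generalizing u w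
  · rw [abs_sub_comm, abs_sub_comm w, max_comm]; exact this hw hu (le_of_not_ge huw)
  rw [max_eq_right huw, abs_of_nonneg (sub_nonneg.2 (rpow_le_rpow hu.le huw (by linarith))),
    abs_of_nonneg (sub_nonneg.2 huw)]
  linear_combination rpow_tangent_le hq hw hu.le

lemma add_rpow_le_two_rpow_mul_add_rpow {r s t : ℝ} (hr : 0 ≤ r) (hs : 0 ≤ s) (ht : 0 ≤ t) :
    (s + t) ^ r ≤ 2 ^ r * (s ^ r + t ^ r) := calc
  (s + t) ^ r ≤ (2 * max s t) ^ r := by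
    gcongr; rw [two_mul]; exact add_le_add (le_max_left s t) (le_max_right s t)
  _ = 2 ^ r * max s t ^ r := mul_rpow zero_le_two (le_max_of_le_left hs)
  _ ≤ 2 ^ r * (s ^ r + t ^ r) := by
    gcongr
    rcases max_choice s t with h | h <;> rw [h]
    · linarith [rpow_nonneg ht r]
    · linarith [rpow_nonneg hs r]

lemma rpow_sub_rpow_sub_mul_le_mul_sq_add {p : ℝ} (hp : 1 < p) {u w : ℝ} (hu : 0 < u)
    (hw : 0 < w) :
    w ^ p - u ^ p - p * u ^ (p - 1) * (w - u) ≤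
      p * (1 + (p - 1) * 2 ^ (p - 2)) * (u ^ (p - 2) * (w - u) ^ 2 + |w - u| ^ p) := by
  have hS₁ : 0 ≤ u ^ (p - 2) * (w - u) ^ 2 := by positivity
  have hS₂ : 0 ≤ |w - u| ^ p := by positivity
  have hprod : (w ^ (p - 1) - u ^ (p - 1)) * (w - u) ≤ |w ^ (p - 1) - u ^ (p - 1)| * |w - u| := by
    rw [← abs_mul]; exact le_abs_self _
  refine (rpow_sub_rpow_sub_mul_le hp.le hu hw).trans ?_
  rw [mul_assoc, mul_assoc p]
  refine mul_le_mul_of_nonneg_left ?_ (by linarith)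
  rcases le_total p 2 with hp2 | hp2
  · have hdiff := abs_rpow_sub_rpow_le_of_le_one (by linarith : 0 ≤ p - 1) (by linarith) hu.le hw.le
    have hpow : |w - u| ^ (p - 1) * |w - u| = |w - u| ^ p := by
      rw [← rpow_add_one' (abs_nonneg _) (by linarith), sub_add_cancel]
    calc (w ^ (p - 1) - u ^ (p - 1)) * (w - u) ≤ |w - u| ^ (p - 1) * |w - u| := by
          refine hprod.trans ?_; gcongr
      _ ≤ (1 + (p - 1) * 2 ^ (p - 2)) * (u ^ (p - 2) * (w - u) ^ 2 + |w - u| ^ p) := by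
          have : 0 ≤ (p - 1) * 2 ^ (p - 2) := mul_nonneg (by linarith) (by positivity)
          rw [hpow]; nlinarith
  · have hdiff := abs_rpow_sub_rpow_le_of_one_le (by linarith : 1 ≤ p - 1) hu hw
    have hmax : max u w ≤ u + |w - u| := max_le (by linarith [abs_nonneg (w - u)])
      (by linarith [le_abs_self (w - u)])
    have hsplit := add_rpow_le_two_rpow_mul_add_rpow (by linarith : 0 ≤ p - 2) hu.le
      (abs_nonneg (w - u))
    have hpow : |w - u| ^ (p - 2) * (w - u) ^ 2 = |w - u| ^ p := by
      rw [← sq_abs, ← rpow_natCast, ← rpow_add' (abs_nonneg _) (by norm_num; linarith)]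
      norm_num
    calc (w ^ (p - 1) - u ^ (p - 1)) * (w - u)
        ≤ (p - 1) * max u w ^ (p - 1 - 1) * |w - u| * |w - u| := by
          refine hprod.trans ?_; gcongr
      _ ≤ (p - 1) * (2 ^ (p - 2) * (u ^ (p - 2) + |w - u| ^ (p - 2))) * (w - u) ^ 2 := by
          rw [mul_assoc _ |w - u|, ← sq, sq_abs, show p - 1 - 1 = p - 2 by ring]
          gcongr
          exact (rpow_le_rpow (by positivity) hmax (by linarith)).trans hsplit
      _ = (p - 1) * 2 ^ (p - 2) * (u ^ (p - 2) * (w - u) ^ 2 + |w - u| ^ p) := by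
          linear_combination (p - 1) * 2 ^ (p - 2) * hpow
      _ ≤ (1 + (p - 1) * 2 ^ (p - 2)) * (u ^ (p - 2) * (w - u) ^ 2 + |w - u| ^ p) := by
          linarith

lemma mul_rpow_div_two_le {p a B : ℝ} (hp : 0 < p) (ha : 0 ≤ a) (hB : 0 ≤ B) :
    (a * B) ^ (p / 2) ≤ (a ^ (p - 1) * B + a * B ^ (p - 1)) / 2 := by
  have hamgm := geom_mean_le_arith_mean2_weighted (w₁ := 1 / 2) (w₂ := 1 / 2)
    (p₁ := a ^ (p - 1) * B) (p₂ := a * B ^ (p - 1)) (by norm_num) (by norm_num)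
    (by positivity) (by positivity) (by norm_num)
  have hsucc : ∀ x : ℝ, 0 ≤ x → x ^ (p - 1) * x = x ^ p := fun x hx => by
    rw [← rpow_add_one' hx (by linarith), sub_add_cancel]
  have hprod : a ^ (p - 1) * B * (a * B ^ (p - 1)) = (a * B) ^ p := by
    rw [mul_rpow ha hB, ← hsucc a ha, ← hsucc B hB]; ring
  rw [← mul_rpow (by positivity) (by positivity), hprod, ← rpow_mul (by positivity)] at hamgm
  convert hamgm using 2 <;> ring

lemma abs_rpow_le_of_sq_le {p a B d : ℝ} (hp : 0 ≤ p) (ha : 0 ≤ a) (hB : 0 ≤ B)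
    (hd : d ^ 2 ≤ 8 * a * B + 2 * B ^ 2) :
    |d| ^ p ≤ 4 ^ p * ((a * B) ^ (p / 2) + B ^ p) := by
  have hp2 : 0 ≤ p / 2 := by positivity
  calc |d| ^ p = (d ^ 2) ^ (p / 2) := by
        rw [← sq_abs, ← rpow_natCast, ← rpow_mul (abs_nonneg d)]; ring_nf
    _ ≤ (8 * (a * B + B ^ 2)) ^ (p / 2) := by gcongr; nlinarith
    _ ≤ 8 ^ (p / 2) * (2 ^ (p / 2) * ((a * B) ^ (p / 2) + (B ^ 2) ^ (p / 2))) := by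
        rw [mul_rpow (by norm_num) (by positivity)]
        gcongr
        exact add_rpow_le_two_rpow_mul_add_rpow hp2 (by positivity) (by positivity)
    _ = 4 ^ p * ((a * B) ^ (p / 2) + B ^ p) := by
        rw [← mul_assoc, ← mul_rpow (by norm_num) (by norm_num), ← rpow_natCast B 2,
          ← rpow_mul hB, show (8 : ℝ) * 2 = 4 ^ (2 : ℝ) by norm_num, ← rpow_mul (by norm_num)]
        ring_nf

lemma sq_norm_add_sq_sub_norm_sq_le {E : Type*} [NormedAddCommGroup E] [InnerProductSpace ℝ E]
    (x y : E) : (‖x + y‖ ^ 2 - ‖x‖ ^ 2) ^ 2 ≤ 8 * ‖x‖ ^ 2 * ‖y‖ ^ 2 + 2 * ‖y‖ ^ 4 := by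
  have hcs := abs_real_inner_le_norm x y
  have hcs2 : inner ℝ x y ^ 2 ≤ (‖x‖ * ‖y‖) ^ 2 := sq_le_sq' (abs_le.1 hcs).1 (abs_le.1 hcs).2
  rw [norm_add_sq_real]
  nlinarith [sq_nonneg (2 * inner ℝ x y - ‖y‖ ^ 2)]

lemma mul_sq_add_abs_rpow_add_le_of_sq_le {p K a B d : ℝ} (hp : 1 < p) (hK : 0 ≤ K)
    (ha : 0 < a) (hB : 0 ≤ B) (hd : d ^ 2 ≤ 8 * a * B + 2 * B ^ 2) :
    K * (a ^ (p - 2) * d ^ 2 + |d| ^ p) + p * (a ^ (p - 1) * B) ≤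
      (K * (8 + 4 ^ p) + p) *
        (a ^ (p - 1) * B + a ^ (p - 2) * B ^ 2 + a * B ^ (p - 1) + B ^ p) := by
  have hT : 0 ≤ a ^ (p - 1) * B := by positivity
  have hU : 0 ≤ a ^ (p - 2) * B ^ 2 := by positivity
  have hV : 0 ≤ a * B ^ (p - 1) := by positivity
  have hW : 0 ≤ B ^ p := by positivity
  have hsq : a ^ (p - 2) * d ^ 2 ≤ 8 * (a ^ (p - 1) * B) + 2 * (a ^ (p - 2) * B ^ 2) := by
    have : a ^ (p - 2) * a = a ^ (p - 1) := by
      rw [← rpow_add_one ha.ne']; ring_nf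
    calc a ^ (p - 2) * d ^ 2 ≤ a ^ (p - 2) * (8 * a * B + 2 * B ^ 2) := by gcongr
      _ = _ := by rw [← this]; ring
  have hpow : |d| ^ p ≤ 4 ^ p * ((a ^ (p - 1) * B + a * B ^ (p - 1)) / 2 + B ^ p) :=
    (abs_rpow_le_of_sq_le (by linarith) ha.le hB hd).trans (by
      gcongr; exact mul_rpow_div_two_le (by linarith) ha.le hB)
  have h4 : 0 ≤ K * 4 ^ p := by positivity
  have hp0 : 0 ≤ p := by linarith
  nlinarith [mul_nonneg hK hU, mul_nonneg hK hV, mul_nonneg hK hW, mul_nonneg h4 hT,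
    mul_nonneg h4 hU, mul_nonneg h4 hV, mul_nonneg hp0 hU, mul_nonneg hp0 hV, mul_nonneg hp0 hW]

/-- Taylor-type bound for `R(x) = (ε+|x|²)^p`, `p > 1`, with
`∇R(x) = 2p(ε+|x|²)^{p-1} x`. -/
theorem stmt10 (m : ℕ) (ε p : ℝ) (hε : 0 < ε) (hp : 1 < p) :
    ∃ C : ℝ, 0 < C ∧
      ∀ x y : EuclideanSpace ℝ (Fin m),
        (ε + ‖x + y‖ ^ 2) ^ p - (ε + ‖x‖ ^ 2) ^ p -
            (inner ℝ ((2 * p * (ε + ‖x‖ ^ 2) ^ (p - 1)) • x) y : ℝ) ≤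
          C * ((ε + ‖x‖ ^ 2) ^ (p - 1) * ‖y‖ ^ 2 +
                (ε + ‖x‖ ^ 2) ^ (p - 2) * ‖y‖ ^ 4 +
                (ε + ‖x‖ ^ 2) * ‖y‖ ^ (2 * p - 2) +
                ‖y‖ ^ (2 * p)) := by
  set K := p * (1 + (p - 1) * 2 ^ (p - 2))
  have hK : 0 < K := by
    have : 0 < (p - 1) * 2 ^ (p - 2) := mul_pos (by linarith) (by positivity)
    positivity
  refine ⟨K * (8 + 4 ^ p) + p, by positivity, fun x y => ?_⟩
  set a := ε + ‖x‖ ^ 2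
  set d := ‖x + y‖ ^ 2 - ‖x‖ ^ 2
  have ha : 0 < a := by positivity
  have hv : a + d = ε + ‖x + y‖ ^ 2 := by ring
  have hd : d ^ 2 ≤ 8 * a * ‖y‖ ^ 2 + 2 * (‖y‖ ^ 2) ^ 2 := by
    have : ‖x‖ ^ 2 ≤ a := le_add_of_nonneg_left hε.le
    nlinarith [sq_norm_add_sq_sub_norm_sq_le x y, sq_nonneg ‖y‖]
  have hlhs : (ε + ‖x + y‖ ^ 2) ^ p - a ^ p - inner ℝ ((2 * p * a ^ (p - 1)) • x) y =
      ((a + d) ^ p - a ^ p - p * a ^ (p - 1) * (a + d - a)) + p * (a ^ (p - 1) * ‖y‖ ^ 2) := by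
    rw [real_inner_smul_left, hv, norm_add_sq_real]
    ring
  have hy : ∀ q : ℝ, ‖y‖ ^ (2 * q) = (‖y‖ ^ 2) ^ q := fun q => by
    rw [rpow_mul (norm_nonneg y), rpow_two]
  rw [hlhs, show 2 * p - 2 = 2 * (p - 1) by ring, hy, hy, show ‖y‖ ^ 4 = (‖y‖ ^ 2) ^ 2 by ring]
  calc _ ≤ K * (a ^ (p - 2) * d ^ 2 + |d| ^ p) + p * (a ^ (p - 1) * ‖y‖ ^ 2) := by
        gcongr
        have hw : 0 < a + d := by rw [hv]; positivity
        simpa using rpow_sub_rpow_sub_mul_le_mul_sq_add hp ha hw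
    _ ≤ _ := mul_sq_add_abs_rpow_add_le_of_sq_le hp hK.le ha (by positivity) hd
end

section
/- Let ψ_n(x) = (∫₀^{x} ∫₀^{y} φ_n(z) dz dy)·1_{(0,∞)}(x), where φ_n is a nonnegative continuous function supported in (a_n, a_{n−1}) ⊂ (0,1) with ∫ φ_n = 1 and r(u)² φ_n(u) ≤ 2/n for a nondecreasing continuous r > 0 on (0,1]. Then ψ_n ∈ C²(ℝ), 0 ≤ ψ_n'(x) ≤ 1 for all x, ψ_n(x) ↑ x⁺ pointwise as n → ∞, and r(|x|)² ψ_n''(x) ≤ 2/n for all x. -/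
open Real Set Filter Topology intervalIntegral

/-- properties of the Yamada–Watanabe approximations
`ψ_n(x) = (∫₀^x ∫₀^y φ_n(z) dz dy)·1_{(0,∞)}(x)`. -/
theorem stmt12 (r : ℝ → ℝ) (a : ℕ → ℝ) (φ : ℕ → ℝ → ℝ)
    (hrpos : ∀ u, 0 < u → 0 < r u)
    (hrmono : MonotoneOn r (Set.Ici 0))
    (hrcont : ContinuousOn r (Set.Ioi 0))
    (ha0 : a 0 = 1) (hanti : StrictAnti a) (hapos : ∀ n, 0 < a n)
    (halim : Tendsto a atTop (𝓝 0))
    (haint : ∀ n : ℕ, (∫ u in a (n+1)..a n, 1 / (r u) ^ 2) = (n : ℝ) + 1)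
    (hφcont : ∀ n, Continuous (φ n)) (hφnonneg : ∀ n u, 0 ≤ φ n u)
    (hφsupp : ∀ n, Function.support (φ n) ⊆ Set.Ioo (a (n+1)) (a n))
    (hφint : ∀ n, (∫ u in a (n+1)..a n, φ n u) = 1)
    (hφbd : ∀ n u, 0 < u → (r u) ^ 2 * φ n u ≤ 2 / ((n : ℝ) + 1))
    (ψ : ℕ → ℝ → ℝ)
    (hψ : ∀ n x, ψ n x =
      (∫ y in (0:ℝ)..x, ∫ z in (0:ℝ)..y, φ n z) *
        Set.indicator (Set.Ioi (0:ℝ)) (fun _ => (1:ℝ)) x) :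
    (∀ n, ContDiff ℝ 2 (ψ n)) ∧
    (∀ n x, 0 ≤ deriv (ψ n) x ∧ deriv (ψ n) x ≤ 1) ∧
    (∀ x, Monotone (fun n => ψ n x) ∧
      Tendsto (fun n => ψ n x) atTop (𝓝 (max x 0))) ∧
    (∀ n x, (r |x|) ^ 2 * deriv (deriv (ψ n)) x ≤ 2 / ((n : ℝ) + 1)) := by
  set F : ℕ → ℝ → ℝ := fun n y => ∫ z in (0:ℝ)..y, φ n z with hFdef
  have hφ0 : ∀ n z, z ∉ Set.Ioo (a (n+1)) (a n) → φ n z = 0 := by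
    intro n z hz
    by_contra h
    exact hz (hφsupp n h)
  have hφii : ∀ n (c d : ℝ), IntervalIntegrable (φ n) MeasureTheory.volume c d :=
    fun n c d => (hφcont n).intervalIntegrable c d
  have hφint0 : ∀ n (c d : ℝ),
      (∀ z ∈ Set.uIcc c d, z ∉ Set.Ioo (a (n+1)) (a n)) → (∫ z in c..d, φ n z) = 0 := by
    intro n c d h
    rw [intervalIntegral.integral_congr (g := fun _ => (0:ℝ))
      (fun z hz => hφ0 n z (h z hz))]
    simp
  have hF0 : ∀ n y, y ≤ a (n+1) → F n y = 0 := by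
    intro n y hy
    apply hφint0
    intro z hz hz'
    have h1 : z ≤ max 0 y := (Set.mem_uIcc.mp hz).elim (fun h => h.2.trans (le_max_right _ _))
      (fun h => h.2.trans (le_max_left _ _))
    have h2 : max 0 y ≤ a (n+1) := max_le (hapos _).le hy
    exact absurd hz'.1 (by linarith)
  have hF1 : ∀ n y, a n ≤ y → F n y = 1 := by
    intro n y hy
    have e1 : (∫ z in (0:ℝ)..(a (n+1)), φ n z) = 0 :=
      hF0 n (a (n+1)) le_rfl
    have e3 : (∫ z in (a n)..y, φ n z) = 0 := by
      apply hφint0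
      intro z hz hz'
      have : a n ≤ z := by
        rcases Set.mem_uIcc.mp hz with h | h
        · exact h.1
        · exact hy.trans h.1
      exact absurd hz'.2 (not_lt.mpr this)
    have split1 : F n y = (∫ z in (0:ℝ)..(a (n+1)), φ n z) + ∫ z in (a (n+1))..y, φ n z :=
      (intervalIntegral.integral_add_adjacent_intervals (hφii n _ _) (hφii n _ _)).symm
    have split2 : (∫ z in (a (n+1))..y, φ n z)
        = (∫ z in (a (n+1))..(a n), φ n z) + ∫ z in (a n)..y, φ n z :=
      (intervalIntegral.integral_add_adjacent_intervals (hφii n _ _) (hφii n _ _)).symm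
    rw [split1, split2, e1, e3, hφint n]
    ring
  have hFmono : ∀ n, Monotone (F n) := by
    intro n y1 y2 h
    have hsub : F n y2 - F n y1 = ∫ z in y1..y2, φ n z :=
      intervalIntegral.integral_interval_sub_left (hφii n _ _) (hφii n _ _)
    have hnn : 0 ≤ ∫ z in y1..y2, φ n z :=
      intervalIntegral.integral_nonneg h (fun u _ => hφnonneg n u)
    linarith
  have hFnonneg : ∀ n y, 0 ≤ F n y := by
    intro n y
    have h0 : F n (min y (a (n+1))) = 0 := hF0 n _ (min_le_right _ _)
    calc (0:ℝ) = F n (min y (a (n+1))) := h0.symm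
      _ ≤ F n y := hFmono n (min_le_left _ _)
  have hFle1 : ∀ n y, F n y ≤ 1 := by
    intro n y
    calc F n y ≤ F n (max y (a n)) := hFmono n (le_max_left _ _)
      _ = 1 := hF1 n _ (le_max_right _ _)
  have hFd : ∀ n y, HasDerivAt (F n) (φ n y) y :=
    fun n y => ((hφcont n).integral_hasStrictDerivAt 0 y).hasDerivAt
  have hFcont : ∀ n, Continuous (F n) :=
    fun n => continuous_iff_continuousAt.2 fun y => (hFd n y).continuousAt
  have hFii : ∀ n (c d : ℝ), IntervalIntegrable (F n) MeasureTheory.volume c d :=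
    fun n c d => (hFcont n).intervalIntegrable c d
  have hGd : ∀ n x, HasDerivAt (fun x => ∫ y in (0:ℝ)..x, F n y) (F n x) x :=
    fun n x => ((hFcont n).integral_hasStrictDerivAt 0 x).hasDerivAt
  have hψeq : ∀ n, ψ n = fun x => ∫ y in (0:ℝ)..x, F n y := by
    intro n
    funext x
    rw [hψ]
    by_cases hx : (0:ℝ) < x
    · rw [Set.indicator_of_mem (Set.mem_Ioi.mpr hx), mul_one]
    · rw [Set.indicator_of_notMem (by simpa using hx), mul_zero]
      symm
      rw [intervalIntegral.integral_congr (g := fun _ => (0:ℝ)) ?_]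
      · simp
      · intro y hy
        have h1 : y ≤ max 0 x := (Set.mem_uIcc.mp hy).elim
          (fun h => h.2.trans (le_max_right _ _)) (fun h => h.2.trans (le_max_left _ _))
        have h2 : max 0 x ≤ 0 := max_le le_rfl (not_lt.mp hx)
        exact hF0 n y (by linarith [hapos (n+1)])
  have hderiv : ∀ n, deriv (ψ n) = F n := by
    intro n
    funext x
    rw [hψeq n]
    exact (hGd n x).deriv
  have hderiv2 : ∀ n, deriv (deriv (ψ n)) = φ n := by
    intro n
    rw [hderiv n]
    funext y
    exact (hFd n y).deriv
  refine ⟨?_, ?_, ?_, ?_⟩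
  · -- C²
    intro n
    rw [show (2 : WithTop ℕ∞) = 1 + 1 from by norm_num, contDiff_succ_iff_deriv]
    refine ⟨fun x => by rw [hψeq n]; exact (hGd n x).differentiableAt, by simp, ?_⟩
    rw [hderiv n, contDiff_one_iff_deriv]
    refine ⟨fun y => (hFd n y).differentiableAt, ?_⟩
    have : deriv (F n) = φ n := funext fun y => (hFd n y).deriv
    rw [this]
    exact hφcont n
  · intro n x
    rw [hderiv n]
    exact ⟨hFnonneg n x, hFle1 n x⟩
  · intro x
    have hψval : ∀ n, ψ n x = ∫ y in (0:ℝ)..x, F n y := fun n => by rw [hψeq n]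
    have hψ0 : x ≤ 0 → ∀ n, ψ n x = 0 := by
      intro hx n
      rw [hψ, Set.indicator_of_notMem (by simpa using not_lt.mpr hx), mul_zero]
    have Fstep : ∀ n y, F n y ≤ F (n+1) y := by
      intro n y
      rcases le_total y (a (n+1)) with h | h
      · rw [hF0 n y h]; exact hFnonneg (n+1) y
      · rw [hF1 (n+1) y h]; exact hFle1 n y
    constructor
    · -- monotone in n
      intro m k hmk
      rcases le_or_gt x 0 with hx | hx
      · simp only [hψ0 hx]; exact le_rfl
      · simp only [hψval]
        apply intervalIntegral.integral_mono_on hx.le (hFii m 0 x) (hFii k 0 x)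
        intro y _
        exact monotone_nat_of_le_succ (fun n => Fstep n y) hmk
    · rcases le_or_gt x 0 with hx | hx
      · have : (fun n => ψ n x) = fun _ => (0:ℝ) := funext fun n => hψ0 hx n
        rw [this, max_eq_right hx]
        exact tendsto_const_nhds
      · rw [max_eq_left hx.le]
        have hupper : ∀ n, ψ n x ≤ x := by
          intro n
          rw [hψval n]
          calc (∫ y in (0:ℝ)..x, F n y) ≤ ∫ _ in (0:ℝ)..x, (1:ℝ) :=
                intervalIntegral.integral_mono_on hx.le (hFii n 0 x)
                  intervalIntegrable_const (fun y _ => hFle1 n y)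
            _ = x := by simp
        have hlower : ∀ n, x - a n ≤ ψ n x := by
          intro n
          rcases le_total x (a n) with h | h
          · have : 0 ≤ ψ n x := by
              rw [hψval n]
              exact intervalIntegral.integral_nonneg hx.le (fun y _ => hFnonneg n y)
            linarith
          · rw [hψval n,
              ← intervalIntegral.integral_add_adjacent_intervals (hFii n 0 (a n)) (hFii n (a n) x)]
            have h1 : 0 ≤ ∫ y in (0:ℝ)..(a n), F n y :=
              intervalIntegral.integral_nonneg (hapos n).le (fun y _ => hFnonneg n y)
            have h2 : x - a n ≤ ∫ y in (a n)..x, F n y := by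
              calc x - a n = ∫ _ in (a n)..x, (1:ℝ) := by simp
                _ ≤ ∫ y in (a n)..x, F n y := by
                    apply intervalIntegral.integral_mono_on h intervalIntegrable_const
                      (hFii n (a n) x)
                    intro y hy
                    rw [hF1 n y hy.1]
            linarith
        have hxa : Tendsto (fun n => x - a n) atTop (𝓝 x) := by
          have := tendsto_const_nhds (x := x) (f := atTop (α := ℕ)) |>.sub halim
          simpa using this
        exact tendsto_of_tendsto_of_tendsto_of_le_of_le hxa tendsto_const_nhds hlower hupper
  · intro n x
    rw [hderiv2 n]
    rcases lt_or_ge 0 x with hx | hx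
    · rw [abs_of_pos hx]
      exact hφbd n x hx
    · have hz : φ n x = 0 := by
        apply hφ0
        intro hmem
        exact absurd hmem.1 (not_lt.mpr (hx.trans (hapos (n+1)).le))
      rw [hz, mul_zero]
      positivity
end

section
/- Consider the one-dimensional jump SDE X_t = x + ∫₀^t ∫_𝒰 (−X_{s−}) N(du,ds), with N a Poisson random measure of finite intensity μ(𝒰) < ∞ and first jump time τ_1. Then X_t = x·1_{τ_1 > t} is the unique solution, and for any two initial values x ≠ y one has X_{τ_1}(x) = X_{τ_1}(y) = 0 whenever τ_1 < ∞; hence the non-contact property fails. -/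
open Real Set Filter Topology

/-- A càdlàg function `Y` solves the jump equation
`Y_t = y₀ + ∫₀^t ∫_𝒰 (−Y_{s−}) N(du,ds)` pathwise, for a realization of a
Poisson random measure with finite intensity whose jump times are `τ 1 < τ 2 < ⋯`
(the stochastic integral is `Σ_{n ≥ 1, τ n ≤ t} (−1)·Y(τ n −)` and the left
limit `Y(τ n −)` equals `Y (τ (n−1))` for a solution, constant between jumps). -/
def SolvesJump1 (τ : ℕ → ℝ) (y₀ : ℝ) (Y : ℝ → ℝ) : Prop :=
  ∀ t : ℝ, 0 ≤ t →
    Y t = y₀ + ∑' n : ℕ, (if 1 ≤ n ∧ τ n ≤ t then -(Y (τ (n - 1))) else 0)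

lemma exK (τ : ℕ → ℝ) (hτmono : StrictMono τ) (hτtop : Tendsto τ atTop atTop)
    (t : ℝ) (ht : τ 0 ≤ t) : ∃ K, ∀ n, τ n ≤ t ↔ n ≤ K := by
  obtain ⟨M, hM⟩ := (hτtop.eventually_gt_atTop t).exists_forall_of_atTop
  have hbdd : BddAbove {n | τ n ≤ t} := ⟨M, fun n hn => by
    by_contra h
    exact absurd hn (not_le.2 (hM n (le_of_lt (not_le.1 h))))⟩
  have hne : {n : ℕ | τ n ≤ t}.Nonempty := ⟨0, ht⟩
  refine ⟨sSup {n | τ n ≤ t}, fun n => ⟨fun h => le_csSup hbdd h, fun h => ?_⟩⟩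
  exact le_trans (hτmono.monotone h) (Nat.sSup_mem hne hbdd)

lemma key_tsum (τ : ℕ → ℝ) (t : ℝ) (K : ℕ) (h : ∀ n, τ n ≤ t ↔ n ≤ K) (f : ℕ → ℝ) :
    (∑' n : ℕ, (if 1 ≤ n ∧ τ n ≤ t then f n else 0)) = ∑ n ∈ Finset.Icc 1 K, f n := by
  rw [tsum_eq_sum (s := Finset.Icc 1 K) ?_]
  · exact Finset.sum_congr rfl fun n hn => by
      rw [Finset.mem_Icc] at hn
      rw [if_pos ⟨hn.1, (h n).2 hn.2⟩]
  · intro n hn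
    rw [Finset.mem_Icc] at hn
    rw [if_neg]
    rw [h n]
    tauto

/-- `X_t = x·1_{t < τ 1}` is the unique solution of
`dX = ∫ (−X_{s−}) N(du,ds)`, and for any two initial values the solutions
coincide (equal `0`) at the first jump time `τ 1`: the non-contact property fails. -/
theorem stmt17 (τ : ℕ → ℝ) (hτ0 : τ 0 = 0) (hτmono : StrictMono τ)
    (hτtop : Tendsto τ atTop atTop) (x : ℝ) (X : ℝ → ℝ)
    (hX : ∀ t, X t = if t < τ 1 then x else 0) :
    SolvesJump1 τ x X ∧
    (∀ Y : ℝ → ℝ, SolvesJump1 τ x Y → ∀ t, 0 ≤ t → Y t = X t) ∧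
    (∀ y : ℝ, ∀ Xy : ℝ → ℝ, (∀ t, Xy t = if t < τ 1 then y else 0) →
      X (τ 1) = 0 ∧ Xy (τ 1) = 0) := by
  have hpos : ∀ n : ℕ, 1 ≤ n → 0 < τ n := fun n hn => hτ0 ▸ hτmono (by omega)
  -- the standard indicator sum
  have hsum : ∀ K : ℕ, (∑ n ∈ Finset.Icc 1 K, (if n = 1 then -x else 0)) =
      if 1 ≤ K then -x else 0 := by
    intro K
    rw [Finset.sum_ite_eq' (Finset.Icc 1 K) 1 (fun _ => -x)]
    simp [Finset.mem_Icc]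
  refine ⟨?_, ?_, ?_⟩
  · intro t ht
    obtain ⟨K, hK⟩ := exK τ hτmono hτtop t (hτ0 ▸ ht)
    rw [key_tsum τ t K hK]
    have : ∀ n ∈ Finset.Icc 1 K, -(X (τ (n - 1))) = if n = 1 then -x else 0 := by
      intro n hn
      rw [Finset.mem_Icc] at hn
      rcases eq_or_lt_of_le hn.1 with h1 | h1
      · rw [if_pos h1.symm, hX, ← h1]
        simp [if_pos (hτ0 ▸ hpos 1 le_rfl)]
      · rw [if_neg (by omega), hX, if_neg (not_lt.2 (hτmono.monotone (by omega)))]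
        simp
    rw [Finset.sum_congr rfl this, hsum]
    rw [hX]
    by_cases h1 : τ 1 ≤ t
    · rw [if_neg (not_lt.2 h1), if_pos ((hK 1).1 h1)]; ring
    · rw [if_pos (not_le.1 h1), if_neg (fun hc => h1 ((hK 1).2 hc))]; ring
  · intro Y hY t ht
    have hY0 : Y 0 = x := by
      have := hY 0 le_rfl
      have hK : ∀ n, τ n ≤ 0 ↔ n ≤ 0 := by
        refine fun n => ⟨fun h => ?_, fun h => ?_⟩
        · by_contra hc
          exact absurd h (not_le.2 (hpos n (by omega)))
        · interval_cases n; exact le_of_eq hτ0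
      rw [key_tsum τ 0 0 hK] at this
      simpa using this
    have hYk : ∀ k : ℕ, 1 ≤ k → Y (τ k) = 0 := by
      intro k
      induction k using Nat.strong_induction_on with
      | _ k ih =>
        intro hk
        have ht' : (0:ℝ) ≤ τ k := le_of_lt (hpos k hk)
        have hK : ∀ n, τ n ≤ τ k ↔ n ≤ k := fun n => hτmono.le_iff_le
        have heq := hY (τ k) ht'
        rw [key_tsum τ (τ k) k hK] at heq
        have : ∀ n ∈ Finset.Icc 1 k, -(Y (τ (n - 1))) = if n = 1 then -x else 0 := by
          intro n hn
          rw [Finset.mem_Icc] at hn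
          rcases eq_or_lt_of_le hn.1 with h1 | h1
          · rw [if_pos h1.symm, ← h1]
            simp [hτ0, hY0]
          · rw [if_neg (by omega), ih (n - 1) (by omega) (by omega)]
            simp
        rw [Finset.sum_congr rfl this, hsum, if_pos hk] at heq
        rw [heq]; ring
    obtain ⟨K, hK⟩ := exK τ hτmono hτtop t (hτ0 ▸ ht)
    have heq := hY t ht
    rw [key_tsum τ t K hK] at heq
    have : ∀ n ∈ Finset.Icc 1 K, -(Y (τ (n - 1))) = if n = 1 then -x else 0 := by
      intro n hn
      rw [Finset.mem_Icc] at hn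
      rcases eq_or_lt_of_le hn.1 with h1 | h1
      · rw [if_pos h1.symm, ← h1]
        simp [hτ0, hY0]
      · rw [if_neg (by omega), hYk (n - 1) (by omega)]
        simp
    rw [Finset.sum_congr rfl this, hsum] at heq
    rw [heq, hX]
    by_cases h1 : τ 1 ≤ t
    · rw [if_pos ((hK 1).1 h1), if_neg (not_lt.2 h1)]; ring
    · rw [if_neg (fun hc => h1 ((hK 1).2 hc)), if_pos (not_le.1 h1)]; ring
  · intro y Xy hXy
    exact ⟨by rw [hX]; simp, by rw [hXy]; simp⟩
end
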